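/- arXiv:1501.01415 — 3 statements merged into one kernel-verified Lean document; each statement's English description precedes it below -/
import Mathlib

section
/- Let σ ∈ (1/2, 1). Then there exist constants 0 < c₁ ≤ c₂ depending only on σ (not on k) such that for every k ∈ ℝ with k ≠ 0 and every ξ with |ξ| ≤ |k|/2, c₁ · 2σ(2σ−1)|k|^{2σ−2} ξ² ≤ p_k(ξ) ≤ c₂ · 2σ(2σ−1)|k|^{2σ−2} ξ². (Low-frequency two-sided bound for p_k.) -/
/-!
Dividing by `k` gives the scaling `p_k(ξ) = |k|^{2σ} p_1(ξ/k)`, and `p_1(t) = (1+t)^q - 1 - qt`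
(`q = 2σ`) is the second-order Taylor remainder of `z ↦ z^q` at `1`. On `[1/2, 3/2]` its second
derivative `q(q-1) z^{q-2}` lies between `q(q-1)(3/2)^{q-2}` and `q(q-1)(1/2)^{q-2}`, since
`q - 2 < 0`, and comparing `z^q` with the parabolas of these curvatures bounds the remainder by
the corresponding multiples of `t²`.
-/

open Real

/-- The symbol `p_k(ξ) = |ξ+k|^{2σ} − |k|^{2σ} − 2σ|k|^{2σ−2}kξ`. -/
noncomputable def pSymb (σ k : ℝ) (ξ : ℝ) : ℝ :=
  |ξ + k| ^ (2*σ) - |k| ^ (2*σ) - 2*σ * |k| ^ (2*σ - 2) * k * ξ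

lemma ConvexOn.add_deriv_mul_sub_le {S : Set ℝ} {f : ℝ → ℝ} {x y d : ℝ}
    (hf : ConvexOn ℝ S f) (hx : x ∈ S) (hy : y ∈ S) (hd : HasDerivAt f d x) :
    f x + d * (y - x) ≤ f y := by
  rcases lt_trichotomy x y with hxy | rfl | hxy
  · have h := hf.le_slope_of_hasDerivAt hx hy hxy hd
    rw [slope_def_field, le_div_iff₀ (sub_pos.2 hxy)] at h
    linarith
  · simp
  · have h := hf.slope_le_of_hasDerivAt hy hx hxy hd
    rw [slope_def_field, div_le_iff₀ (sub_pos.2 hxy)] at h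
    linarith

section TaylorBounds

variable {D : Set ℝ} {f f' f'' : ℝ → ℝ} {x y : ℝ}

/-- Subtracting `m z² / 2` makes `f` convex, and its tangent line at `x` then lies below it. -/
lemma le_sub_sub_deriv_mul_of_le_deriv2 {m : ℝ} (hD : Convex ℝ D) (hf : ContinuousOn f D)
    (hf' : ∀ z ∈ interior D, HasDerivAt f (f' z) z)
    (hf'' : ∀ z ∈ interior D, HasDerivAt f' (f'' z) z) (hm : ∀ z ∈ interior D, m ≤ f'' z)
    (hx : x ∈ interior D) (hy : y ∈ D) :
    m / 2 * (y - x) ^ 2 ≤ f y - f x - f' x * (y - x) := by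
  have hg' (z : ℝ) (hz : z ∈ interior D) :
      HasDerivAt (fun w ↦ f w - m / 2 * w ^ 2) (f' z - m * z) z :=
    ((hf' z hz).sub ((hasDerivAt_pow 2 z).const_mul (m / 2))).congr_deriv (by norm_num; ring)
  have hconvex : ConvexOn ℝ D (fun w ↦ f w - m / 2 * w ^ 2) :=
    convexOn_of_hasDerivWithinAt2_nonneg (f'' := fun z ↦ f'' z - m) hD
      (hf.sub (by fun_prop)) (fun z hz ↦ (hg' z hz).hasDerivWithinAt)
      (fun z hz ↦ ((hf'' z hz).sub ((hasDerivAt_id z).const_mul m)).hasDerivWithinAt.congr_deriv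
        (by simp)) (fun z hz ↦ sub_nonneg.2 (hm z hz))
  have h := hconvex.add_deriv_mul_sub_le (interior_subset hx) hy (hg' x hx)
  linarith

lemma sub_sub_deriv_mul_le_of_deriv2_le {M : ℝ} (hD : Convex ℝ D) (hf : ContinuousOn f D)
    (hf' : ∀ z ∈ interior D, HasDerivAt f (f' z) z)
    (hf'' : ∀ z ∈ interior D, HasDerivAt f' (f'' z) z) (hM : ∀ z ∈ interior D, f'' z ≤ M)
    (hx : x ∈ interior D) (hy : y ∈ D) :
    f y - f x - f' x * (y - x) ≤ M / 2 * (y - x) ^ 2 := by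
  have h := le_sub_sub_deriv_mul_of_le_deriv2 (f := -f) (f' := -f') (f'' := -f'') (m := -M) hD
    hf.neg (fun z hz ↦ (hf' z hz).neg) (fun z hz ↦ (hf'' z hz).neg)
    (fun z hz ↦ neg_le_neg (hM z hz)) hx hy
  simp only [Pi.neg_apply] at h
  linarith

end TaylorBounds

lemma one_add_rpow_sub_one_sub_mul_bounds {q r t : ℝ} (hq₁ : 1 ≤ q) (hq₂ : q ≤ 2) (hr₀ : 0 < r)
    (hr : r < 1) (ht : |t| ≤ r) :
    (1 + r) ^ (q - 2) / 2 * (q * (q - 1) * t ^ 2) ≤ (1 + t) ^ q - 1 - q * t ∧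
      (1 + t) ^ q - 1 - q * t ≤ (1 - r) ^ (q - 2) / 2 * (q * (q - 1) * t ^ 2) := by
  obtain ⟨ht₁, ht₂⟩ := abs_le.1 ht
  have hD : interior (Set.Icc (1 - r) (1 + r)) = Set.Ioo (1 - r) (1 + r) := interior_Icc
  have hf : ContinuousOn (fun z : ℝ ↦ z ^ q) (Set.Icc (1 - r) (1 + r)) :=
    (continuous_rpow_const (by linarith)).continuousOn
  have hf' (z : ℝ) (_ : z ∈ interior (Set.Icc (1 - r) (1 + r))) :
      HasDerivAt (fun z : ℝ ↦ z ^ q) (q * z ^ (q - 1)) z :=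
    hasDerivAt_rpow_const (Or.inr hq₁)
  have hf'' (z : ℝ) (hz : z ∈ interior (Set.Icc (1 - r) (1 + r))) :
      HasDerivAt (fun z : ℝ ↦ q * z ^ (q - 1)) (q * (q - 1) * z ^ (q - 2)) z := by
    rw [hD] at hz
    refine ((hasDerivAt_rpow_const (Or.inl ?_)).const_mul q).congr_deriv ?_
    · linarith [hz.1]
    · rw [show q - 1 - 1 = q - 2 by ring]; ring
  have hcoeff : 0 ≤ q * (q - 1) := by nlinarith
  have h1 : (1 : ℝ) ∈ interior (Set.Icc (1 - r) (1 + r)) := by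
    rw [hD]; constructor <;> linarith
  have h1t : 1 + t ∈ Set.Icc (1 - r) (1 + r) := by constructor <;> linarith
  have hlow := le_sub_sub_deriv_mul_of_le_deriv2 (convex_Icc _ _) hf hf' hf''
    (m := q * (q - 1) * (1 + r) ^ (q - 2)) (fun z hz ↦ by
      rw [hD] at hz
      exact mul_le_mul_of_nonneg_left
        (rpow_le_rpow_of_nonpos (by linarith [hz.1]) hz.2.le (by linarith)) hcoeff) h1 h1t
  have hup := sub_sub_deriv_mul_le_of_deriv2_le (convex_Icc _ _) hf hf' hf''
    (M := q * (q - 1) * (1 - r) ^ (q - 2)) (fun z hz ↦ by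
      rw [hD] at hz
      exact mul_le_mul_of_nonneg_left
        (rpow_le_rpow_of_nonpos (by linarith) hz.1.le (by linarith)) hcoeff) h1 h1t
  simp only [one_rpow, add_sub_cancel_left, mul_one] at hlow hup
  constructor <;> linarith

lemma abs_rpow_sub_two {k : ℝ} (hk : k ≠ 0) (q : ℝ) : |k| ^ (q - 2) = |k| ^ q / k ^ 2 := by
  rw [rpow_sub (abs_pos.2 hk), rpow_two, sq_abs]

/-- `p_k(ξ) = |k|^{2σ} p_1(ξ/k)`. -/
lemma pSymb_eq_abs_rpow_mul {σ k ξ : ℝ} (hk : k ≠ 0) (hξ : |ξ| ≤ |k|) :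
    pSymb σ k ξ = |k| ^ (2 * σ) * ((1 + ξ / k) ^ (2 * σ) - 1 - 2 * σ * (ξ / k)) := by
  have h : 0 ≤ 1 + ξ / k := by
    have h1 : |ξ / k| ≤ 1 := by rw [abs_div]; exact div_le_one_of_le₀ hξ (abs_nonneg k)
    linarith [neg_abs_le (ξ / k)]
  have habs : |ξ + k| = |k| * (1 + ξ / k) := by
    rw [← abs_of_nonneg h, ← abs_mul]; congr 1; field_simp; ring
  rw [pSymb, habs, mul_rpow (abs_nonneg k) h, abs_rpow_sub_two hk]
  field_simp

/-- Low-frequency two-sided bound for `p_k`, uniform in `k`: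
`p_k(ξ) ∼ 2σ(2σ−1)|k|^{2σ−2}ξ²` for `|ξ| ≤ |k|/2`. -/
theorem pSymb_low_freq_bound (σ : ℝ) (hσ : σ ∈ Set.Ioo (1/2 : ℝ) 1) :
    ∃ c₁ c₂ : ℝ, 0 < c₁ ∧ c₁ ≤ c₂ ∧
      ∀ k : ℝ, k ≠ 0 → ∀ ξ : ℝ, |ξ| ≤ |k|/2 →
        c₁ * (2*σ*(2*σ - 1) * |k| ^ (2*σ - 2) * ξ ^ 2) ≤ pSymb σ k ξ ∧
        pSymb σ k ξ ≤ c₂ * (2*σ*(2*σ - 1) * |k| ^ (2*σ - 2) * ξ ^ 2) := by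
  obtain ⟨hσ₁, hσ₂⟩ := hσ
  refine ⟨(1 + 1/2 : ℝ) ^ (2*σ - 2) / 2, (1 - 1/2 : ℝ) ^ (2*σ - 2) / 2, by positivity,
    div_le_div_of_nonneg_right (rpow_le_rpow_of_nonpos (by norm_num) (by norm_num) (by linarith))
      zero_le_two, ?_⟩
  intro k hk ξ hξ
  have ht : |ξ / k| ≤ 1/2 := by rw [abs_div, div_le_iff₀ (abs_pos.2 hk)]; linarith
  obtain ⟨hlow, hup⟩ := one_add_rpow_sub_one_sub_mul_bounds (q := 2*σ) (by linarith)
    (by linarith) one_half_pos one_half_lt_one ht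
  have hscale : 2*σ*(2*σ - 1) * |k| ^ (2*σ - 2) * ξ ^ 2 =
      |k| ^ (2*σ) * (2*σ*(2*σ - 1) * (ξ / k) ^ 2) := by
    rw [abs_rpow_sub_two hk]; field_simp
  have hk_pow : 0 ≤ |k| ^ (2*σ) := by positivity
  rw [hscale, pSymb_eq_abs_rpow_mul hk (by linarith [abs_nonneg ξ]), mul_left_comm,
    mul_left_comm _ (|k| ^ (2*σ))]
  exact ⟨mul_le_mul_of_nonneg_left hlow hk_pow, mul_le_mul_of_nonneg_left hup hk_pow⟩
end

section
/- Let σ ∈ (1/2, 1). Then there exist constants 0 < c₁ ≤ c₂ depending only on σ (not on k) such that for every k ∈ ℝ with k ≠ 0 and every ξ with |ξ| ≥ |k|/2, c₁ |ξ|^{2σ} ≤ p_k(ξ) ≤ c₂ |ξ|^{2σ}. (High-frequency two-sided bound for p_k.) -/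
/-!
The symbol is homogeneous: `p_{ck}(cξ) = |c|^{2σ} p_k(ξ)`. Taking `c = ξ` gives
`p_k(ξ) = |ξ|^{2σ} g(k/ξ)` with `g(s) = p_s(1)`, and `|ξ| ≥ |k|/2` means `k/ξ ∈ [-2, 2]`.
Since `2σ > 1`, the term `|s|^{2σ-2} s` vanishes continuously at `s = 0`, so `g` is continuous;
it is positive by the strict tangent-line inequality for `|x|^{2σ}` (Bernoulli's inequality).
The minimum and maximum of `g` on `[-2, 2]` are then the two constants.
-/

open Real

open Set Filter Topology

lemma continuous_abs_rpow_sub_two_mul_self {p : ℝ} (hp : 1 < p) :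
    Continuous fun x : ℝ => |x| ^ (p - 2) * x := by
  rw [continuous_iff_continuousAt]
  intro x
  rcases eq_or_ne x 0 with rfl | hx
  · have hnorm : ∀ y : ℝ, ‖|y| ^ (p - 2) * y‖ = |y| ^ (p - 1) := fun y => by
      rw [norm_mul, Real.norm_eq_abs, Real.norm_eq_abs,
        abs_of_nonneg (rpow_nonneg (abs_nonneg y) _),
        ← rpow_add_one' (abs_nonneg y) (by linarith)]
      ring_nf
    have hlim : Tendsto (fun y : ℝ => |y| ^ (p - 1)) (𝓝 0) (𝓝 0) := by
      simpa [zero_rpow (by linarith : p - 1 ≠ 0)] using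
        (continuous_abs.rpow_const fun _ => Or.inr (by linarith : 0 ≤ p - 1)).tendsto (0 : ℝ)
    simpa [ContinuousAt] using squeeze_zero_norm (fun y => (hnorm y).le) hlim
  · exact (continuous_abs.continuousAt.rpow_const (Or.inl (abs_ne_zero.mpr hx))).mul
      continuousAt_id

lemma continuous_pSymb_left {σ : ℝ} (hσ : 1 / 2 < σ) (ξ : ℝ) :
    Continuous fun k => pSymb σ k ξ := by
  have hmid := continuous_abs_rpow_sub_two_mul_self (p := 2 * σ) (by linarith)
  have hpow : ∀ {f : ℝ → ℝ}, Continuous f → Continuous fun k => |f k| ^ (2 * σ) :=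
    fun hf => hf.abs.rpow_const fun _ => Or.inr (by linarith)
  have hlin : Continuous fun k => 2 * σ * (|k| ^ (2 * σ - 2) * k) * ξ :=
    (continuous_const.mul hmid).mul continuous_const
  unfold pSymb
  exact ((hpow (continuous_const.add continuous_id)).sub (hpow continuous_id)).sub
    (hlin.congr fun k => by ring)

lemma pSymb_mul_mul (σ : ℝ) {c : ℝ} (hc : c ≠ 0) (k ξ : ℝ) :
    pSymb σ (c * k) (c * ξ) = |c| ^ (2 * σ) * pSymb σ k ξ := by
  have hc' : 0 < |c| := abs_pos.mpr hc
  have hsub : |c| ^ (2 * σ - 2) = |c| ^ (2 * σ) / c ^ 2 := by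
    rw [rpow_sub hc', rpow_two, sq_abs]
  simp only [pSymb, ← mul_add, abs_mul, mul_rpow (abs_nonneg _) (abs_nonneg _), hsub]
  field_simp

lemma pSymb_one_pos {σ : ℝ} (hσ : 1 / 2 < σ) {t : ℝ} (ht : t ≠ 0) : 0 < pSymb σ 1 t := by
  simp only [pSymb, abs_one, one_rpow, mul_one]
  rcases le_or_gt (-1) t with h | h
  · rw [abs_of_nonneg (by linarith), add_comm]
    linarith [one_add_mul_self_lt_rpow_one_add h ht (by linarith : 1 < 2 * σ)]
  · nlinarith [rpow_nonneg (abs_nonneg (t + 1)) (2 * σ)]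

lemma pSymb_pos {σ : ℝ} (hσ : 1 / 2 < σ) (k : ℝ) {ξ : ℝ} (hξ : ξ ≠ 0) :
    0 < pSymb σ k ξ := by
  rcases eq_or_ne k 0 with rfl | hk
  · simp [pSymb, zero_rpow (by linarith : 2 * σ ≠ 0), rpow_pos_of_pos (abs_pos.mpr hξ)]
  · have h := pSymb_mul_mul σ hk 1 (ξ / k)
    rw [mul_one, mul_div_cancel₀ ξ hk] at h
    rw [h]
    exact mul_pos (rpow_pos_of_pos (abs_pos.mpr hk) _) (pSymb_one_pos hσ (div_ne_zero hξ hk))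

/-- High-frequency two-sided bound for `p_k`, uniform in `k`:
`p_k(ξ) ∼ |ξ|^{2σ}` for `|ξ| ≥ |k|/2`. -/
theorem pSymb_high_freq_bound (σ : ℝ) (hσ : σ ∈ Set.Ioo (1/2 : ℝ) 1) :
    ∃ c₁ c₂ : ℝ, 0 < c₁ ∧ c₁ ≤ c₂ ∧
      ∀ k : ℝ, k ≠ 0 → ∀ ξ : ℝ, |k|/2 ≤ |ξ| →
        c₁ * |ξ| ^ (2*σ) ≤ pSymb σ k ξ ∧ pSymb σ k ξ ≤ c₂ * |ξ| ^ (2*σ) := by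
  have hg := (continuous_pSymb_left hσ.1 1).continuousOn (s := Icc (-2) 2)
  have hne : (Icc (-2 : ℝ) 2).Nonempty := nonempty_Icc.mpr (by norm_num)
  obtain ⟨s₁, hs₁, hmin⟩ := isCompact_Icc.exists_isMinOn hne hg
  obtain ⟨s₂, -, hmax⟩ := isCompact_Icc.exists_isMaxOn hne hg
  refine ⟨pSymb σ s₁ 1, pSymb σ s₂ 1, pSymb_pos hσ.1 s₁ one_ne_zero, hmax hs₁,
    fun k hk ξ hξ => ?_⟩
  have hξ₀ : ξ ≠ 0 := abs_pos.mp (by linarith [abs_pos.mpr hk])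
  have hs : k / ξ ∈ Icc (-2) 2 := by
    rw [mem_Icc, ← abs_le, abs_div, div_le_iff₀ (abs_pos.mpr hξ₀)]
    linarith
  have hscale := pSymb_mul_mul σ hξ₀ (k / ξ) 1
  rw [mul_one, mul_div_cancel₀ k hξ₀] at hscale
  have hpow : 0 ≤ |ξ| ^ (2 * σ) := rpow_nonneg (abs_nonneg ξ) _
  rw [hscale, mul_comm _ (pSymb σ _ 1)]
  exact ⟨mul_le_mul_of_nonneg_right (hmin hs) hpow, mul_le_mul_of_nonneg_right (hmax hs) hpow⟩
end

section
/- Let σ ∈ (1/2, 1). Then there exists a constant C > 0 depending only on σ (not on k) such that for every k ∈ ℝ with k ≠ 0 and every ξ ∈ ℝ, p_k(ξ) ≤ C |ξ|^{2σ}. (Uniform upper bound for the symbol p_k.) -/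
/-!
`pSymb σ k ξ` is the first-order Taylor remainder at `k` of `f x = |x| ^ α`, `α = 2σ ∈ (1, 2)`,
whose derivative is `α * |x| ^ (α - 2) * x`. This derivative is `(α - 1)`-Hölder with constant
`2α` on all of `ℝ`: on one side of `0` because `t ↦ t ^ (α - 1)` is subadditive, across `0`
because each of the two terms is at most `|x - y| ^ (α - 1)`. The mean value inequality on the
ball of radius `|ξ|` around `k` then bounds the remainder by `2α |ξ| ^ (α - 1) * |ξ|`,
independently of `k`.
-/

open Real

lemma Real.rpow_sub_rpow_le_sub_rpow {p a b : ℝ} (hp : 0 ≤ p) (hp1 : p ≤ 1) (hb : 0 ≤ b)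
    (hba : b ≤ a) : a ^ p - b ^ p ≤ (a - b) ^ p := by
  have := rpow_add_le_add_rpow (sub_nonneg.2 hba) hb hp hp1
  rw [sub_add_cancel] at this
  linarith

section OddPower

variable {α : ℝ}

lemma abs_rpow_sub_two_mul_self_of_nonneg (hα : 1 < α) {x : ℝ} (hx : 0 ≤ x) :
    |x| ^ (α - 2) * x = x ^ (α - 1) := by
  rw [abs_of_nonneg hx, ← rpow_add_one' hx (by linarith)]
  ring_nf

lemma abs_rpow_sub_two_mul_self_of_nonpos (hα : 1 < α) {x : ℝ} (hx : x ≤ 0) :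
    |x| ^ (α - 2) * x = -(-x) ^ (α - 1) := by
  rw [← abs_rpow_sub_two_mul_self_of_nonneg hα (neg_nonneg.2 hx), abs_neg]
  ring

lemma abs_rpow_sub_two_mul_self_sub_le (hα : 1 < α) (hα2 : α ≤ 2) (x y : ℝ) :
    |(|x| ^ (α - 2) * x) - |y| ^ (α - 2) * y| ≤ 2 * |x - y| ^ (α - 1) := by
  wlog hyx : y ≤ x generalizing x y
  · rw [abs_sub_comm, abs_sub_comm x]
    exact this y x (le_of_not_ge hyx)
  have hβ : 0 ≤ α - 1 := by linarith
  have hβ1 : α - 1 ≤ 1 := by linarith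
  rw [abs_of_nonneg (sub_nonneg.2 hyx)]
  have hdist : 0 ≤ (x - y) ^ (α - 1) := rpow_nonneg (sub_nonneg.2 hyx) _
  suffices 0 ≤ |x| ^ (α - 2) * x - |y| ^ (α - 2) * y ∧
      |x| ^ (α - 2) * x - |y| ^ (α - 2) * y ≤ 2 * (x - y) ^ (α - 1) from
    (abs_of_nonneg this.1).symm ▸ this.2
  rcases le_total 0 y with hy | hy
  · rw [abs_rpow_sub_two_mul_self_of_nonneg hα hy,
      abs_rpow_sub_two_mul_self_of_nonneg hα (hy.trans hyx)]
    exact ⟨sub_nonneg.2 (rpow_le_rpow hy hyx hβ),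
      (rpow_sub_rpow_le_sub_rpow hβ hβ1 hy hyx).trans (by linarith)⟩
  rcases le_total x 0 with hx | hx
  · rw [abs_rpow_sub_two_mul_self_of_nonpos hα hy, abs_rpow_sub_two_mul_self_of_nonpos hα hx]
    have := rpow_sub_rpow_le_sub_rpow hβ hβ1 (neg_nonneg.2 hx) (neg_le_neg hyx)
    rw [neg_sub_neg] at this
    exact ⟨by linarith [rpow_le_rpow (neg_nonneg.2 hx) (neg_le_neg hyx) hβ], by linarith⟩
  · rw [abs_rpow_sub_two_mul_self_of_nonpos hα hy, abs_rpow_sub_two_mul_self_of_nonneg hα hx]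
    have hx' : x ^ (α - 1) ≤ (x - y) ^ (α - 1) := rpow_le_rpow hx (by linarith) hβ
    have hy' : (-y) ^ (α - 1) ≤ (x - y) ^ (α - 1) := rpow_le_rpow (by linarith) (by linarith) hβ
    exact ⟨by linarith [rpow_nonneg hx (α - 1), rpow_nonneg (neg_nonneg.2 hy) (α - 1)],
      by linarith⟩

lemma abs_rpow_taylor_remainder_le (hα : 1 < α) (hα2 : α ≤ 2) (k ξ : ℝ) :
    |ξ + k| ^ α - |k| ^ α - α * |k| ^ (α - 2) * k * ξ ≤ 2 * α * |ξ| ^ α := by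
  set g : ℝ → ℝ := fun t ↦ |t| ^ α - α * |k| ^ (α - 2) * k * t
  have hg : ∀ t, HasDerivAt g (α * (|t| ^ (α - 2) * t - |k| ^ (α - 2) * k)) t := fun t ↦
    ((hasDerivAt_abs_rpow t hα).sub ((hasDerivAt_id' t).const_mul _)).congr_deriv (by ring)
  have hbound : ∀ t ∈ Metric.closedBall k |ξ|,
      ‖α * (|t| ^ (α - 2) * t - |k| ^ (α - 2) * k)‖ ≤ 2 * α * |ξ| ^ (α - 1) := fun t ht ↦ by
    rw [Real.norm_eq_abs, abs_mul, abs_of_pos (by linarith : 0 < α)]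
    calc α * |(|t| ^ (α - 2) * t) - |k| ^ (α - 2) * k|
        ≤ α * (2 * |t - k| ^ (α - 1)) := by
          gcongr; exact abs_rpow_sub_two_mul_self_sub_le hα hα2 t k
      _ ≤ α * (2 * |ξ| ^ (α - 1)) := by
          have htk : |t - k| ≤ |ξ| := by simpa [Real.dist_eq] using ht
          gcongr
      _ = 2 * α * |ξ| ^ (α - 1) := by ring
  have hmvt := (convex_closedBall k |ξ|).norm_image_sub_le_of_norm_hasDerivWithin_le
    (fun t _ ↦ (hg t).hasDerivWithinAt) hbound (Metric.mem_closedBall_self (abs_nonneg ξ))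
    (by simp [Metric.mem_closedBall, dist_eq_norm] : ξ + k ∈ Metric.closedBall k |ξ|)
  rw [add_sub_cancel_right, mul_assoc, Real.norm_eq_abs ξ,
    ← rpow_add_one' (abs_nonneg ξ) (by linarith), sub_add_cancel] at hmvt
  simp only [g, Real.norm_eq_abs] at hmvt
  linarith [le_abs_self (|ξ + k| ^ α - α * |k| ^ (α - 2) * k * (ξ + k) -
    (|k| ^ α - α * |k| ^ (α - 2) * k * k))]

end OddPower

/-- Uniform upper bound for the symbol: `p_k(ξ) ≲ |ξ|^{2σ}`, with constant independent of `k`. -/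
theorem pSymb_upper_bound (σ : ℝ) (hσ : σ ∈ Set.Ioo (1/2 : ℝ) 1) :
    ∃ C : ℝ, 0 < C ∧
      ∀ k : ℝ, k ≠ 0 → ∀ ξ : ℝ, pSymb σ k ξ ≤ C * |ξ| ^ (2*σ) := by
  obtain ⟨hσ1, hσ2⟩ := hσ
  refine ⟨4 * σ, by linarith, fun k _ ξ ↦ ?_⟩
  calc pSymb σ k ξ ≤ 2 * (2 * σ) * |ξ| ^ (2 * σ) :=
        abs_rpow_taylor_remainder_le (by linarith) (by linarith) k ξ
    _ = 4 * σ * |ξ| ^ (2 * σ) := by ring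
end
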